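/- There are constraints expressible both in 1GGD and in GFD for the query language CRPQ[=], but not expressible in GFD for the query language CRPQ[=_c]. In particular, the constraint φ = ((x), ∅ ⇒ (x), {x.a = x.b}) — asserting that in every vertex of the graph the values of properties a and b are defined and equal — is both a 1GGD and a GFD over CRPQ[=], but is not expressible by any finite set of GFDs over CRPQ[=_c]. -/

import Mathlib

namespace PGC

/-- Objects (vertex/edge identifiers). -/
abbrev Obj := ℕ
/-- Labels. -/
abbrev Lab := ℕ
/-- Property keys. -/
abbrev Key := ℕ
/-- Data values. -/
abbrev Val := ℕ
/-- Variables. -/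
abbrev Var := ℕ

/-- A property graph `G = (V, E, η, λ, π)`. -/
structure PGraph where
  V : Finset Obj
  E : Finset Obj
  disj : Disjoint V E
  src : Obj → Obj
  tgt : Obj → Obj
  lab : Obj → Finset Lab
  prop : Obj → Key → Option Val
  src_mem : ∀ e ∈ E, src e ∈ V
  tgt_mem : ∀ e ∈ E, tgt e ∈ V

/-- A walk (path), given by its start vertex and its list of edges. -/
structure Walk where
  start : Obj
  edges : List Obj
deriving DecidableEq

/-- The list of edges forms a walk in `G` starting at the given vertex. -/
def PGraph.walkFrom (G : PGraph) : Obj → List Obj → Prop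
  | u, [] => u ∈ G.V
  | u, e :: es => e ∈ G.E ∧ G.src e = u ∧ G.walkFrom (G.tgt e) es

/-- The final vertex of a walk. -/
def Walk.endpt (G : PGraph) (w : Walk) : Obj :=
  w.edges.foldl (fun _ e => G.tgt e) w.start

/-- What a variable can be bound to: an object (vertex or edge) or a walk. -/
inductive Target where
  | obj (o : Obj)
  | walk (w : Walk)
deriving DecidableEq

/-- Atoms of conjunctive (regular path) queries. -/
inductive Atom where
  | vertex (x : Var) (ls : List Lab)
  | edge (x e y : Var) (ls : List Lab)
  | path (x p y : Var) (r : RegularExpression Lab)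

def Atom.vars : Atom → Finset Var
  | .vertex x _ => {x}
  | .edge x e y _ => {x, e, y}
  | .path x p y _ => {x, p, y}

def Atom.isPath : Atom → Prop
  | .path _ _ _ _ => True
  | _ => False

/-- A query is a finite conjunction of atoms. -/
abbrev Query := List Atom

/-- Variables of a query. -/
def qvars (Q : Query) : Finset Var := Q.foldr (fun a s => a.vars ∪ s) ∅

/-- Satisfaction of an atom by an assignment `h` in a property graph. -/
def Atom.sat (G : PGraph) (h : Var → Target) : Atom → Prop
  | .vertex x ls => ∃ o, h x = .obj o ∧ o ∈ G.V ∧ ∀ l ∈ ls, l ∈ G.lab o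
  | .edge x e y ls => ∃ ox oe oy, h x = .obj ox ∧ h e = .obj oe ∧ h y = .obj oy ∧
      oe ∈ G.E ∧ G.src oe = ox ∧ G.tgt oe = oy ∧ ∀ l ∈ ls, l ∈ G.lab oe
  | .path x p y r => ∃ ox w oy, h x = .obj ox ∧ h p = .walk w ∧ h y = .obj oy ∧
      w.start = ox ∧ G.walkFrom ox w.edges ∧ Walk.endpt G w = oy ∧
      ∃ word : List Lab, word ∈ r.matches' ∧
        List.Forall₂ (fun e l => l ∈ G.lab e) w.edges word

/-- A match of a query `Q` over `G` (all-walk semantics). -/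
def Match (G : PGraph) (Q : Query) (h : Var → Target) : Prop :=
  ∀ a ∈ Q, a.sat G h

/-- The property value `h(x).a`, if defined. -/
def propOf (G : PGraph) (h : Var → Target) (x : Var) (a : Key) : Option Val :=
  match h x with
  | .obj o => G.prop o a
  | .walk _ => none

/-- Data predicates. -/
inductive Pred where
  | propEq (x : Var) (a : Key) (y : Var) (b : Key)   -- x.a = y.b
  | propEqC (x : Var) (a : Key) (c : Val)            -- x.a = c
  | ex (x : Var) (a : Key)                           -- ex(x.a)
  | idEq (x y : Var)                                 -- x = y
  | propNe (x : Var) (a : Key) (y : Var) (b : Key)   -- x.a ≠ y.b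
  | propNeC (x : Var) (a : Key) (c : Val)            -- x.a ≠ c
  | idNe (x y : Var)                                 -- x ≠ y

/-- Satisfaction of a data predicate. -/
def Pred.sat (G : PGraph) (h : Var → Target) : Pred → Prop
  | .propEq x a y b => ∃ v, propOf G h x a = some v ∧ propOf G h y b = some v
  | .propEqC x a c => propOf G h x a = some c
  | .ex x a => (propOf G h x a).isSome
  | .idEq x y => h x = h y
  | .propNe x a y b => ∃ v w, propOf G h x a = some v ∧ propOf G h y b = some w ∧ v ≠ w
  | .propNeC x a c => ∃ v, propOf G h x a = some v ∧ v ≠ c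
  | .idNe x y => h x ≠ h y

def Pred.vars : Pred → Finset Var
  | .propEq x _ y _ => {x, y}
  | .propEqC x _ _ => {x}
  | .ex x _ => {x}
  | .idEq x y => {x, y}
  | .propNe x _ y _ => {x, y}
  | .propNeC x _ _ => {x}
  | .idNe x y => {x, y}

/-- `h ⊨ C`: every predicate of `C` holds under `h`. -/
def satC (G : PGraph) (h : Var → Target) (C : List Pred) : Prop :=
  ∀ p ∈ C, p.sat G h

/-- A predicate uses only equality (no inequality). -/
def Pred.isEq : Pred → Prop
  | .propEq _ _ _ _ => True
  | .propEqC _ _ _ => True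
  | .ex _ _ => True
  | .idEq _ _ => True
  | _ => False

/-- A predicate is an equality with a constant. -/
def Pred.isEqC : Pred → Prop
  | .propEqC _ _ _ => True
  | _ => False

/-- A query language: whether path atoms are allowed, and which data predicates are allowed. -/
structure QLang where
  allowPaths : Bool
  allowPred : Pred → Prop

/-- CQ[=] -/
def CQeq : QLang := ⟨false, Pred.isEq⟩
/-- CQ[=,≠] -/
def CQeqNe : QLang := ⟨false, fun _ => True⟩
/-- CRPQ[=] -/
def CRPQeq : QLang := ⟨true, Pred.isEq⟩
/-- CRPQ[=,≠] -/
def CRPQeqNe : QLang := ⟨true, fun _ => True⟩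
/-- CRPQ[=_c] -/
def CRPQeqC : QLang := ⟨true, Pred.isEqC⟩

/-- The query belongs to the query language. -/
def QueryIn (L : QLang) (Q : Query) : Prop :=
  ∀ a ∈ Q, a.isPath → L.allowPaths = true

/-- All predicates belong to the query language. -/
def PredsIn (L : QLang) (C : List Pred) : Prop :=
  ∀ p ∈ C, L.allowPred p

/-- Graph functional dependency `(Q(x̄,ȳ), C_s(x̄,ȳ) ⇒ C_t(x̄))`. -/
structure GFD where
  shared : List Var
  Q : Query
  Cs : List Pred
  Ct : List Pred

def GFD.wf (L : QLang) (φ : GFD) : Prop :=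
  QueryIn L φ.Q ∧ PredsIn L φ.Cs ∧ PredsIn L φ.Ct ∧
  φ.shared.toFinset ⊆ qvars φ.Q ∧
  (∀ p ∈ φ.Ct, p.vars ⊆ φ.shared.toFinset) ∧
  (∀ p ∈ φ.Cs, p.vars ⊆ qvars φ.Q)

def GFD.sat (φ : GFD) (G : PGraph) : Prop :=
  ∀ h, Match G φ.Q h → satC G h φ.Cs → satC G h φ.Ct

def GFD.allVars (φ : GFD) : Finset Var :=
  qvars φ.Q ∪ φ.shared.toFinset ∪ (φ.Cs ++ φ.Ct).foldr (fun p s => p.vars ∪ s) ∅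

/-- Graph generating dependency `(Q_s(x̄,ȳ), C_s(x̄,ȳ) ⇒ Q_t(x̄,z̄), C_t(x̄,z̄))`. -/
structure GGD where
  shared : List Var
  Qs : Query
  Cs : List Pred
  Qt : Query
  Ct : List Pred

def GGD.wf (L : QLang) (φ : GGD) : Prop :=
  QueryIn L φ.Qs ∧ QueryIn L φ.Qt ∧ PredsIn L φ.Cs ∧ PredsIn L φ.Ct ∧
  φ.shared.toFinset ⊆ qvars φ.Qs ∧
  qvars φ.Qs ∩ qvars φ.Qt ⊆ φ.shared.toFinset ∧
  (∀ p ∈ φ.Cs, p.vars ⊆ qvars φ.Qs) ∧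
  (∀ p ∈ φ.Ct, p.vars ⊆ qvars φ.Qt ∪ φ.shared.toFinset)

def GGD.sat (φ : GGD) (G : PGraph) : Prop :=
  ∀ hs, Match G φ.Qs hs → satC G hs φ.Cs →
    ∃ ht, Match G φ.Qt ht ∧ (∀ v ∈ φ.shared, ht v = hs v) ∧ satC G ht φ.Ct

/-- Assertion keywords of PG-Keys. -/
inductive KW where
  | mandatory
  | exclusive
  | singleton
deriving DecidableEq

/-- Entries of a key expression: a variable or a property reference `v.a`. -/
inductive KeyExpr where
  | var (v : Var)
  | ref (v : Var) (a : Key)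

def KeyExpr.vars : KeyExpr → Finset Var
  | .var v => {v}
  | .ref v _ => {v}

/-- Value of a key-expression entry under a match, if defined. -/
def KeyExpr.eval (G : PGraph) (h : Var → Target) : KeyExpr → Option (Target ⊕ Val)
  | .var v => some (Sum.inl (h v))
  | .ref v a => (propOf G h v a).map Sum.inr

def keysDefined (G : PGraph) (h : Var → Target) (ks : List KeyExpr) : Prop :=
  ∀ k ∈ ks, (KeyExpr.eval G h k).isSome

def keysEq (G : PGraph) (h h' : Var → Target) (ks : List KeyExpr) : Prop :=
  ∀ k ∈ ks, KeyExpr.eval G h k = KeyExpr.eval G h' k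

/-- A PG-Key `(Q_s(x,ȳ), C_s ⇒ α(ν̄), Q_t(x,z̄), C_t)`. -/
structure PGKey where
  x : Var
  Qs : Query
  Cs : List Pred
  kw : KW
  keys : List KeyExpr
  Qt : Query
  Ct : List Pred

def PGKey.wf (L : QLang) (ψ : PGKey) : Prop :=
  QueryIn L ψ.Qs ∧ QueryIn L ψ.Qt ∧ PredsIn L ψ.Cs ∧ PredsIn L ψ.Ct ∧
  ψ.x ∈ qvars ψ.Qs ∧ ψ.x ∈ qvars ψ.Qt ∧
  qvars ψ.Qs ∩ qvars ψ.Qt = {ψ.x} ∧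
  (∀ p ∈ ψ.Cs, p.vars ⊆ qvars ψ.Qs) ∧
  (∀ p ∈ ψ.Ct, p.vars ⊆ qvars ψ.Qt) ∧
  (∀ k ∈ ψ.keys, k.vars ⊆ qvars ψ.Qt)

def PGKey.sat (ψ : PGKey) (G : PGraph) : Prop :=
  match ψ.kw with
  | .mandatory =>
      ∀ hs, Match G ψ.Qs hs → satC G hs ψ.Cs →
        ∃ ht, Match G ψ.Qt ht ∧ ht ψ.x = hs ψ.x ∧ satC G ht ψ.Ct ∧
          keysDefined G ht ψ.keys
  | .singleton =>
      ∀ hs, Match G ψ.Qs hs → satC G hs ψ.Cs →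
        ∀ ht ht', Match G ψ.Qt ht → satC G ht ψ.Ct → ht ψ.x = hs ψ.x →
          Match G ψ.Qt ht' → satC G ht' ψ.Ct → ht' ψ.x = hs ψ.x →
          keysDefined G ht ψ.keys → keysDefined G ht' ψ.keys →
          keysEq G ht ht' ψ.keys
  | .exclusive =>
      ∀ hs hs', Match G ψ.Qs hs → satC G hs ψ.Cs →
        Match G ψ.Qs hs' → satC G hs' ψ.Cs →
        ∀ ht ht', Match G ψ.Qt ht → satC G ht ψ.Ct → ht ψ.x = hs ψ.x →
          Match G ψ.Qt ht' → satC G ht' ψ.Ct → ht' ψ.x = hs' ψ.x →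
          keysDefined G ht ψ.keys → keysDefined G ht' ψ.keys →
          keysEq G ht ht' ψ.keys →
          hs ψ.x = hs' ψ.x

def PGKey.allVars (ψ : PGKey) : Finset Var :=
  qvars ψ.Qs ∪ qvars ψ.Qt ∪
  (ψ.Cs ++ ψ.Ct).foldr (fun p s => p.vars ∪ s) ∅ ∪
  ψ.keys.foldr (fun k s => k.vars ∪ s) ∅ ∪ {ψ.x}

/-- Variable renaming on atoms, queries, predicates and key expressions. -/
def Atom.rename (σ : Var → Var) : Atom → Atom
  | .vertex x ls => .vertex (σ x) ls
  | .edge x e y ls => .edge (σ x) (σ e) (σ y) ls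
  | .path x p y r => .path (σ x) (σ p) (σ y) r

def Query.rename (σ : Var → Var) (Q : Query) : Query := Q.map (Atom.rename σ)

def Pred.rename (σ : Var → Var) : Pred → Pred
  | .propEq x a y b => .propEq (σ x) a (σ y) b
  | .propEqC x a c => .propEqC (σ x) a c
  | .ex x a => .ex (σ x) a
  | .idEq x y => .idEq (σ x) (σ y)
  | .propNe x a y b => .propNe (σ x) a (σ y) b
  | .propNeC x a c => .propNeC (σ x) a c
  | .idNe x y => .idNe (σ x) (σ y)

def KeyExpr.rename (σ : Var → Var) : KeyExpr → KeyExpr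
  | .var v => .var (σ v)
  | .ref v a => .ref (σ v) a

/-- The existence predicates `ex(ν̄)` associated with a key expression. -/
def exPreds (ks : List KeyExpr) : List Pred :=
  ks.filterMap fun k =>
    match k with
    | .var _ => none
    | .ref v a => some (.ex v a)

/-- The predicate expressing equality of a key-expression entry with its `σ`-copy. -/
def keyEqPred (σ : Var → Var) : KeyExpr → Pred
  | .var v => .idEq v (σ v)
  | .ref v a => .propEq v a (σ v) a

/-- The renaming that fixes `x` and otherwise applies `σ`. -/
def fixAt (x : Var) (σ : Var → Var) : Var → Var :=
  fun v => if v = x then x else σ v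

/-- `G'` is an induced subgraph of `G`. -/
def InducedSubgraph (G' G : PGraph) : Prop :=
  G'.V ⊆ G.V ∧
  G'.E = G.E.filter (fun e => G.src e ∈ G'.V ∧ G.tgt e ∈ G'.V) ∧
  ∀ o ∈ G'.V ∪ G'.E, G'.src o = G.src o ∧ G'.tgt o = G.tgt o ∧
    G'.lab o = G.lab o ∧ ∀ k, G'.prop o k = G.prop o k

/-- A constraint (given by its satisfaction relation) is expressible by a
finite set of constraints of the class `C`. -/
def Expressible (s : PGraph → Prop) (C : Set (PGraph → Prop)) : Prop :=
  ∃ Ψ : List (PGraph → Prop), (∀ ψ ∈ Ψ, ψ ∈ C) ∧ ∀ G, s G ↔ ∀ ψ ∈ Ψ, ψ G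

/-- Expressiveness inclusion of constraint classes. -/
def ClassLE (C₁ C₂ : Set (PGraph → Prop)) : Prop :=
  ∀ s ∈ C₁, Expressible s C₂

/-- Equal expressive power. -/
def ClassEquiv (C₁ C₂ : Set (PGraph → Prop)) : Prop :=
  ClassLE C₁ C₂ ∧ ClassLE C₂ C₁

/-- Strict expressiveness inclusion. -/
def ClassLT (C₁ C₂ : Set (PGraph → Prop)) : Prop :=
  ClassLE C₁ C₂ ∧ ∃ s ∈ C₂, ¬ Expressible s C₁

/-- The class GFD over the query language `L`. -/
def GFDc (L : QLang) : Set (PGraph → Prop) :=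
  {s | ∃ φ : GFD, φ.wf L ∧ s = φ.sat}

/-- The class nGFD over `L`. -/
def nGFDc (n : ℕ) (L : QLang) : Set (PGraph → Prop) :=
  {s | ∃ φ : GFD, φ.wf L ∧ φ.shared.length ≤ n ∧ s = φ.sat}

/-- The class GGD over `L`. -/
def GGDc (L : QLang) : Set (PGraph → Prop) :=
  {s | ∃ φ : GGD, φ.wf L ∧ s = φ.sat}

/-- The class nGGD over `L`. -/
def nGGDc (n : ℕ) (L : QLang) : Set (PGraph → Prop) :=
  {s | ∃ φ : GGD, φ.wf L ∧ φ.shared.length ≤ n ∧ s = φ.sat}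

/-- The class PG-Keys over `L`. -/
def PGKc (L : QLang) : Set (PGraph → Prop) :=
  {s | ∃ ψ : PGKey, ψ.wf L ∧ s = ψ.sat}

/-- The class mPG-Keys over `L`. -/
def mPGKc (L : QLang) : Set (PGraph → Prop) :=
  {s | ∃ ψ : PGKey, ψ.wf L ∧ ψ.kw = KW.mandatory ∧ s = ψ.sat}


/-- The 1GGD `φ = ((x), ∅ ⇒ (x), {x.a = x.b})`, with `x = 0`, `a = 0`, `b = 1`. -/
def abGGD : GGD :=
  ⟨[0], [Atom.vertex 0 []], [], [Atom.vertex 0 []], [Pred.propEq 0 0 0 1]⟩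

/-- The same constraint as a GFD. -/
def abGFD : GFD :=
  ⟨[0], [Atom.vertex 0 []], [], [Pred.propEq 0 0 0 1]⟩

/-! ### Auxiliary machinery for the inexpressibility proof -/

/-- A one-vertex counterexample graph with `a ↦ p`, `b ↦ q`. -/
def Gcex (p q : Val) : PGraph where
  V := {0}
  E := ∅
  disj := by simp
  src := id
  tgt := id
  lab := fun _ => ∅
  prop := fun o k => if o = 0 then (if k = 0 then some p else if k = 1 then some q else none) else none
  src_mem := by simp
  tgt_mem := by simp

lemma atom_sat_congr {G G' : PGraph} (hV : G.V = G'.V) (hE : G.E = G'.E)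
    (hs : G.src = G'.src) (ht : G.tgt = G'.tgt) (hl : G.lab = G'.lab)
    (h : Var → Target) (a : Atom) : a.sat G h ↔ a.sat G' h := by
  have hwalk : ∀ es u, G.walkFrom u es ↔ G'.walkFrom u es := by
    intro es
    induction es with
    | nil => intro u; simp [PGraph.walkFrom, hV]
    | cons e es ih => intro u; simp [PGraph.walkFrom, hE, hs, ht, ih]
  have hend : ∀ w : Walk, w.endpt G = w.endpt G' := by
    intro w; simp [Walk.endpt, ht]
  cases a <;> simp [Atom.sat, hV, hE, hs, ht, hl, hwalk, hend]

/-- The constant of a constant-equality predicate. -/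
def predC : Pred → ℕ
  | .propEqC _ _ c => c
  | _ => 0

lemma le_foldr_max {l : List Pred} {p : Pred} (hp : p ∈ l) :
    predC p ≤ l.foldr (fun p n => max (predC p) n) 0 := by
  induction l with
  | nil => simp at hp
  | cons q l ih =>
    rcases List.mem_cons.mp hp with rfl | h
    · exact le_max_left _ _
    · exact le_trans (ih h) (le_max_right _ _)

def gfdBound (φ : GFD) : ℕ := (φ.Cs ++ φ.Ct).foldr (fun p n => max (predC p) n) 0

lemma propOf_Gcex (p q : Val) (h : Var → Target) (x : Var) (a : Key) :
    propOf (Gcex p q) h x a = none ∨ propOf (Gcex p q) h x a = some p ∨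
      propOf (Gcex p q) h x a = some q := by
  unfold propOf
  cases hx : h x with
  | obj o =>
    show (Gcex p q).prop o a = none ∨ _
    unfold Gcex
    dsimp
    split_ifs <;> simp
  | walk w => simp

lemma predC_not_sat {N v : ℕ} (hv : N ≤ v) (p : Pred) (hp : p.isEqC)
    (hc : predC p < N) (h : Var → Target) : ¬ p.sat (Gcex N v) h := by
  cases p <;> simp [Pred.isEqC] at hp
  case propEqC x a c =>
    intro hsat
    simp only [Pred.sat] at hsat
    simp only [predC] at hc
    rcases propOf_Gcex N v h x a with h0 | h0 | h0 <;> rw [h0] at hsat <;> simp at hsat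
    · exact hc.ne' hsat
    · exact (lt_of_lt_of_le hc hv).ne' hsat

lemma satC_iff_nil {N v : ℕ} (hv : N ≤ v) (C : List Pred) (hC : ∀ p ∈ C, p.isEqC)
    (hc : ∀ p ∈ C, predC p < N) (h : Var → Target) :
    satC (Gcex N v) h C ↔ C = [] := by
  constructor
  · intro hs
    cases C with
    | nil => rfl
    | cons p C =>
      exact absurd (hs p (List.mem_cons_self))
        (predC_not_sat hv p (hC p (List.mem_cons_self)) (hc p (List.mem_cons_self)) h)
  · rintro rfl p hp; simp at hp

lemma gfd_sat_transfer (φ : GFD) (hwf : φ.wf CRPQeqC) {N v v' : ℕ}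
    (hv : N ≤ v) (hv' : N ≤ v') (hN : gfdBound φ < N) :
    φ.sat (Gcex N v) → φ.sat (Gcex N v') := by
  obtain ⟨-, hCs, hCt, -, -, -⟩ := hwf
  have hBs : ∀ p ∈ φ.Cs, predC p < N := fun p hp =>
    lt_of_le_of_lt (le_foldr_max (List.mem_append_left _ hp)) hN
  have hBt : ∀ p ∈ φ.Ct, predC p < N := fun p hp =>
    lt_of_le_of_lt (le_foldr_max (List.mem_append_right _ hp)) hN
  intro hs h hm hc
  have hm' : Match (Gcex N v) φ.Q h := by
    intro a ha
    exact (atom_sat_congr (G := Gcex N v') (G' := Gcex N v) rfl rfl rfl rfl rfl h a).mp (hm a ha)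
  have hcsnil : φ.Cs = [] := (satC_iff_nil hv' φ.Cs hCs hBs h).mp hc
  have hc' : satC (Gcex N v) h φ.Cs :=
    (satC_iff_nil hv φ.Cs hCs hBs h).mpr hcsnil
  have hctnil : φ.Ct = [] := (satC_iff_nil hv φ.Ct hCt hBt h).mp (hs h hm' hc')
  exact (satC_iff_nil hv' φ.Ct hCt hBt h).mpr hctnil

lemma exists_bound (Ψ : List (PGraph → Prop)) (hΨ : ∀ ψ ∈ Ψ, ψ ∈ GFDc CRPQeqC) :
    ∃ N₀, ∀ N, N₀ ≤ N → ∀ ψ ∈ Ψ, ψ (Gcex N N) → ψ (Gcex N (N + 1)) := by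
  induction Ψ with
  | nil => exact ⟨0, fun N _ ψ hψ => by simp at hψ⟩
  | cons ψ Ψ ih =>
    obtain ⟨N₀, hN₀⟩ := ih fun ψ' h' => hΨ ψ' (List.mem_cons_of_mem _ h')
    obtain ⟨φ, hwf, hsat⟩ := hΨ ψ List.mem_cons_self
    refine ⟨max N₀ (gfdBound φ + 1), fun N hN ψ' hψ' => ?_⟩
    rcases List.mem_cons.mp hψ' with rfl | h'
    · rw [hsat]
      exact gfd_sat_transfer φ hwf le_rfl (Nat.le_succ N)
        (lt_of_lt_of_le (Nat.lt_succ_self _)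
          (le_trans (le_max_right _ _) hN))
    · exact hN₀ N (le_trans (le_max_left _ _) hN) ψ' h'

lemma abGFD_sat_good (N : ℕ) : abGFD.sat (Gcex N N) := by
  intro h hm _ p hp
  simp only [abGFD, List.mem_singleton] at hp
  subst hp
  have := hm (Atom.vertex 0 []) (List.mem_singleton_self _)
  obtain ⟨o, h0, hoV, -⟩ := this
  have ho : o = 0 := by
    have : o ∈ ({0} : Finset Obj) := hoV
    simpa using this
  subst ho
  exact ⟨N, by simp [propOf, h0, Gcex], by simp [propOf, h0, Gcex]⟩

lemma abGFD_not_sat_bad (N : ℕ) : ¬ abGFD.sat (Gcex N (N + 1)) := by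
  intro hs
  have hm : Match (Gcex N (N + 1)) abGFD.Q (fun _ => .obj 0) := by
    intro a ha
    simp only [abGFD, List.mem_singleton] at ha
    subst ha
    exact ⟨0, rfl, by simp [Gcex], by simp⟩
  have hc : satC (Gcex N (N + 1)) (fun _ => .obj 0) abGFD.Cs := by
    intro p hp; simp [abGFD] at hp
  have := hs _ hm hc (Pred.propEq 0 0 0 1) (List.mem_singleton_self _)
  obtain ⟨w, h1, h2⟩ := this
  simp [propOf, Gcex] at h1 h2
  exact Nat.succ_ne_self N (h2.trans h1.symm)

lemma abGFD_not_expressible : ¬ Expressible abGFD.sat (GFDc CRPQeqC) := by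
  rintro ⟨Ψ, hmem, hiff⟩
  obtain ⟨N₀, hN⟩ := exists_bound Ψ hmem
  have h1 : abGFD.sat (Gcex N₀ N₀) := abGFD_sat_good N₀
  have h2 : abGFD.sat (Gcex N₀ (N₀ + 1)) := by
    rw [hiff]
    intro ψ hψ
    exact hN N₀ le_rfl ψ hψ ((hiff _).mp h1 ψ hψ)
  exact abGFD_not_sat_bad N₀ h2

lemma qvars_single : qvars [Atom.vertex 0 []] = {0} := by
  simp [qvars, Atom.vars]

lemma abGGD_wf : abGGD.wf CRPQeq := by
  refine ⟨?_, ?_, ?_, ?_, ?_, ?_, ?_, ?_⟩ <;>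
    simp [abGGD, QueryIn, PredsIn, CRPQeq, Pred.isEq, qvars_single, Pred.vars]

lemma abGFD_wf : abGFD.wf CRPQeq := by
  refine ⟨?_, ?_, ?_, ?_, ?_, ?_⟩ <;>
    simp [abGFD, QueryIn, PredsIn, CRPQeq, Pred.isEq, qvars_single, Pred.vars]

lemma ggd_iff_gfd (G : PGraph) : abGGD.sat G ↔ abGFD.sat G := by
  constructor
  · intro hg h hm _
    obtain ⟨ht, hmt, hsh, hct⟩ := hg h hm (by intro p hp; simp [abGGD] at hp)
    have ht0 : ht 0 = h 0 := hsh 0 (by simp [abGGD])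
    intro p hp
    simp only [abGFD, List.mem_singleton] at hp
    subst hp
    have := hct (Pred.propEq 0 0 0 1) (List.mem_singleton_self _)
    obtain ⟨w, h1, h2⟩ := this
    refine ⟨w, ?_, ?_⟩ <;> [rw [← h1]; rw [← h2]] <;> simp [propOf, ht0]
  · intro hg h hm hc
    exact ⟨h, hm, fun v _ => rfl, hg h hm hc⟩

/-- `((x), ∅ ⇒ (x), {x.a = x.b})` is both a 1GGD and a GFD over CRPQ[=],
but is not expressible by any finite set of GFDs over CRPQ[=_c]. -/
theorem gfd_eq_1ggd_not_in_gfd_eqC :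
    abGGD.wf CRPQeq ∧ abGGD.shared.length ≤ 1 ∧
    abGFD.wf CRPQeq ∧
    (∀ G, abGGD.sat G ↔ abGFD.sat G) ∧
    ¬ Expressible abGFD.sat (GFDc CRPQeqC) ∧
    ∃ s, s ∈ nGGDc 1 CRPQeq ∧ s ∈ GFDc CRPQeq ∧ ¬ Expressible s (GFDc CRPQeqC) := by
  refine ⟨abGGD_wf, by simp [abGGD], abGFD_wf, ggd_iff_gfd, abGFD_not_expressible, ?_⟩
  refine ⟨abGFD.sat, ⟨abGGD, abGGD_wf, by simp [abGGD], ?_⟩, ⟨abGFD, abGFD_wf, rfl⟩,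
    abGFD_not_expressible⟩
  exact funext fun G => propext (ggd_iff_gfd G) |>.symm

end PGC
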